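/- The inverse of the multiple almost-Riordan array (b | g; f₁, …, f_ℓ) is (1/b₀ + (f_ℓ(h̄)/(b₀ h̄ g(h̄)))·(b₀ − b(h̄)) | 1/g(h̄); h̄·t/f₁(h̄), …, h̄·t/f_ℓ(h̄)), where b₀ = b(0) ≠ 0 and h̄ is the compositional inverse of h = (f₁⋯f_ℓ)^{1/ℓ}. -/

import Mathlib

open PowerSeries

/-- Composition `g ∘ f` of formal power series (meaningful when `f` has zero
constant term). -/
noncomputable def pcomp {K : Type*} [Field K] (g f : PowerSeries K) : PowerSeries K :=
  PowerSeries.mk fun n => ∑ k ∈ Finset.range (n + 1), coeff k g * coeff n (f ^ k)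

/-- `f/t`: the coefficient shift of a power series. -/
noncomputable def pdivX {K : Type*} [Field K] (f : PowerSeries K) : PowerSeries K :=
  PowerSeries.mk fun n => coeff (n + 1) f

/-- `g ∈ K[[t^ℓ]]`. -/
def InTl {K : Type*} [Field K] (ℓ : ℕ) (g : PowerSeries K) : Prop :=
  ∀ n : ℕ, ¬ ℓ ∣ n → coeff n g = 0

/-- A multiplier function: `f ∈ t·K[[t^ℓ]]` with `f'(0) ≠ 0`. -/
def IsMult {K : Type*} [Field K] (ℓ : ℕ) (f : PowerSeries K) : Prop :=
  constantCoeff f = 0 ∧ (∀ n : ℕ, n % ℓ ≠ 1 % ℓ → coeff n f = 0) ∧ coeff 1 f ≠ 0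

/-- The multiple almost-Riordan product (with `ℓ = m + 1`). -/
noncomputable def maMul {K : Type*} [Field K] {m : ℕ}
    (p q : PowerSeries K × PowerSeries K × (Fin (m + 1) → PowerSeries K) × PowerSeries K) :
    PowerSeries K × PowerSeries K × (Fin (m + 1) → PowerSeries K) × PowerSeries K :=
  (C (constantCoeff q.1) * p.1 +
      p.2.1 * (pdivX (p.2.2.1 (Fin.last m)))⁻¹ *
        (pcomp q.1 p.2.2.2 - C (constantCoeff q.1)),
    p.2.1 * pcomp q.2.1 p.2.2.2,
    fun j => pdivX (p.2.2.1 j) * (pdivX p.2.2.2)⁻¹ * pcomp (q.2.2.1 j) p.2.2.2,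
    pcomp q.2.2.2 p.2.2.2)

/-! On series without constant term, `pcomp` is Mathlib's `PowerSeries.subst`, so composing on
the right with such a series is a ring homomorphism, composition is associative, and
`pcomp hbar h = X` makes `· ∘ h` undo `· ∘ hbar`. The one identity specific to the arrays is
`A(h)/t = (h/t)·(A/t)(h)`: it turns `(f_j(h̄)/t)(h)` into `(f_j/t)/(h/t)` and `(h̄/t)(h)` into
`1/(h/t)`. After that, each of the eight entries of the two products is a cancellation of
series with invertible constant term. -/

section Composition

variable {K : Type*} [Field K]

theorem constantCoeff_pcomp (g f : K⟦X⟧) : constantCoeff (pcomp g f) = constantCoeff g := by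
  rw [← coeff_zero_eq_constantCoeff_apply, pcomp, coeff_mk]
  simp

theorem coeff_one_pcomp (g f : K⟦X⟧) : coeff 1 (pcomp g f) = coeff 1 g * coeff 1 f := by
  simp [pcomp, Finset.sum_range_succ, coeff_one]

theorem pcomp_eq_subst {f : K⟦X⟧} (hf : constantCoeff f = 0) (g : K⟦X⟧) :
    pcomp g f = g.subst f := by
  ext n
  rw [coeff_subst' (HasSubst.of_constantCoeff_zero' hf),
    finsum_eq_sum_of_support_subset (s := Finset.range (n + 1))]
  · simp [pcomp]
  · refine Function.support_subset_iff'.2 fun d hd => ?_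
    have hnd : (n : ℕ∞) < d := by simpa using hd
    rw [coeff_of_lt_order n (hnd.trans_le (le_order_pow_of_constantCoeff_eq_zero d hf)),
      smul_zero]

variable {f : K⟦X⟧}

theorem pcomp_add (hf : constantCoeff f = 0) (a b : K⟦X⟧) :
    pcomp (a + b) f = pcomp a f + pcomp b f := by
  simp only [pcomp_eq_subst hf, subst_add (HasSubst.of_constantCoeff_zero' hf)]

theorem pcomp_sub (hf : constantCoeff f = 0) (a b : K⟦X⟧) :
    pcomp (a - b) f = pcomp a f - pcomp b f := by
  simp only [pcomp_eq_subst hf, subst_sub (HasSubst.of_constantCoeff_zero' hf)]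

theorem pcomp_mul (hf : constantCoeff f = 0) (a b : K⟦X⟧) :
    pcomp (a * b) f = pcomp a f * pcomp b f := by
  simp only [pcomp_eq_subst hf, subst_mul (HasSubst.of_constantCoeff_zero' hf)]

theorem pcomp_C (hf : constantCoeff f = 0) (c : K) : pcomp (C c) f = C c := by
  rw [pcomp_eq_subst hf, subst_C]; rfl

theorem pcomp_X (hf : constantCoeff f = 0) : pcomp X f = f := by
  rw [pcomp_eq_subst hf, subst_X (HasSubst.of_constantCoeff_zero' hf)]

theorem pcomp_X_right (a : K⟦X⟧) : pcomp a X = a := by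
  rw [pcomp_eq_subst constantCoeff_X, X_subst]

theorem pcomp_inv (hf : constantCoeff f = 0) {a : K⟦X⟧} (ha : constantCoeff a ≠ 0) :
    pcomp a⁻¹ f = (pcomp a f)⁻¹ := by
  rw [PowerSeries.eq_inv_iff_mul_eq_one (by rwa [constantCoeff_pcomp]), ← pcomp_mul hf,
    PowerSeries.inv_mul_cancel a ha, ← map_one C, pcomp_C hf]

theorem pcomp_pcomp {g : K⟦X⟧} (hf : constantCoeff f = 0) (hg : constantCoeff g = 0)
    (a : K⟦X⟧) : pcomp (pcomp a f) g = pcomp a (pcomp f g) := by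
  rw [pcomp_eq_subst hg, pcomp_eq_subst hf, pcomp_eq_subst (by rwa [constantCoeff_pcomp]),
    pcomp_eq_subst hg, subst_comp_subst_apply (HasSubst.of_constantCoeff_zero' hf)
      (HasSubst.of_constantCoeff_zero' hg)]

end Composition

section DivX

variable {K : Type*} [Field K]

theorem constantCoeff_pdivX (A : K⟦X⟧) : constantCoeff (pdivX A) = coeff 1 A := by
  rw [← coeff_zero_eq_constantCoeff_apply, pdivX, coeff_mk]

theorem X_mul_pdivX {A : K⟦X⟧} (hA : constantCoeff A = 0) : X * pdivX A = A := by
  ext (_ | n)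
  · simp [hA]
  · rw [coeff_succ_X_mul, pdivX, coeff_mk]

theorem pdivX_X : pdivX (X : K⟦X⟧) = 1 := by
  ext n
  simp [pdivX, coeff_X, coeff_one]

theorem pdivX_mul {A : K⟦X⟧} (hA : constantCoeff A = 0) (u : K⟦X⟧) :
    pdivX (A * u) = pdivX A * u := by
  refine mul_left_cancel₀ X_ne_zero ?_
  rw [X_mul_pdivX (by simp [hA]), ← mul_assoc, X_mul_pdivX hA]

theorem pdivX_pcomp {A f : K⟦X⟧} (hA : constantCoeff A = 0) (hf : constantCoeff f = 0) :
    pdivX (pcomp A f) = pdivX f * pcomp (pdivX A) f := by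
  refine mul_left_cancel₀ X_ne_zero ?_
  rw [X_mul_pdivX (by rwa [constantCoeff_pcomp]), ← mul_assoc, X_mul_pdivX hf]
  conv_lhs => rw [← X_mul_pdivX hA]
  rw [pcomp_mul hf, pcomp_X hf]

theorem constantCoeff_pdivX_pcomp (A f : K⟦X⟧) :
    constantCoeff (pdivX (pcomp A f)) = coeff 1 A * coeff 1 f := by
  rw [constantCoeff_pdivX, coeff_one_pcomp]

end DivX

section CompositionalInverse

variable {K : Type*} [Field K] {h hbar : K⟦X⟧}

theorem constantCoeff_eq_zero_of_pcomp_eq_X (hinv : pcomp hbar h = X) :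
    constantCoeff hbar = 0 := by
  rw [← constantCoeff_pcomp hbar h, hinv, constantCoeff_X]

theorem coeff_one_mul_coeff_one_of_pcomp_eq_X (hinv : pcomp hbar h = X) :
    coeff 1 hbar * coeff 1 h = 1 := by
  rw [← coeff_one_pcomp, hinv, coeff_one_X]

theorem pcomp_pcomp_of_pcomp_eq_X (hh0 : constantCoeff h = 0) (hinv : pcomp hbar h = X)
    (a : K⟦X⟧) : pcomp (pcomp a hbar) h = a := by
  rw [pcomp_pcomp (constantCoeff_eq_zero_of_pcomp_eq_X hinv) hh0, hinv, pcomp_X_right]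

theorem pdivX_mul_pcomp_pdivX_of_pcomp_eq_X (hh0 : constantCoeff h = 0)
    (hinv : pcomp hbar h = X) : pdivX h * pcomp (pdivX hbar) h = 1 := by
  rw [← pdivX_pcomp (constantCoeff_eq_zero_of_pcomp_eq_X hinv) hh0, hinv, pdivX_X]

theorem pdivX_mul_pcomp_pdivX_pcomp_of_pcomp_eq_X (hh0 : constantCoeff h = 0)
    (hinv : pcomp hbar h = X) {A : K⟦X⟧} (hA : constantCoeff A = 0) :
    pdivX h * pcomp (pdivX (pcomp A hbar)) h = pdivX A := by
  rw [← pdivX_pcomp (by rwa [constantCoeff_pcomp]) hh0, pcomp_pcomp_of_pcomp_eq_X hh0 hinv]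

end CompositionalInverse

section MultipleAlmostRiordan

variable {K : Type*} [Field K] {m : ℕ}

noncomputable def maInv (b g : K⟦X⟧) (f : Fin (m + 1) → K⟦X⟧) (hbar : K⟦X⟧) :
    K⟦X⟧ × K⟦X⟧ × (Fin (m + 1) → K⟦X⟧) × K⟦X⟧ :=
  ((C (constantCoeff b))⁻¹ +
      pdivX (pcomp (f (Fin.last m)) hbar) * (pdivX hbar)⁻¹ *
        (C (constantCoeff b))⁻¹ * (pcomp g hbar)⁻¹ *
        (C (constantCoeff b) - pcomp b hbar),
    (pcomp g hbar)⁻¹,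
    fun j => hbar * (pdivX (pcomp (f j) hbar))⁻¹, hbar)

variable {b g h hbar : K⟦X⟧} {f : Fin (m + 1) → K⟦X⟧}

theorem constantCoeff_maInv_fst :
    constantCoeff (maInv b g f hbar).1 = (constantCoeff b)⁻¹ := by
  simp [maInv, constantCoeff_pcomp]

theorem pcomp_maInv_fst (hg0 : constantCoeff g ≠ 0)
    (hf0 : ∀ j, constantCoeff (f j) = 0) (hh0 : constantCoeff h = 0)
    (hinv : pcomp hbar h = X) :
    pcomp (maInv b g f hbar).1 h = C (constantCoeff b)⁻¹ +
      pdivX (f (Fin.last m)) * C (constantCoeff b)⁻¹ * g⁻¹ * (C (constantCoeff b) - b) := by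
  have hv0 : constantCoeff (pdivX hbar) ≠ 0 := by
    rw [constantCoeff_pdivX]
    exact left_ne_zero_of_mul_eq_one (coeff_one_mul_coeff_one_of_pcomp_eq_X hinv)
  have hvinv : (pcomp (pdivX hbar) h)⁻¹ = pdivX h :=
    (PowerSeries.inv_eq_iff_mul_eq_one (by rwa [constantCoeff_pcomp])).2
      (pdivX_mul_pcomp_pdivX_of_pcomp_eq_X hh0 hinv)
  simp only [maInv, pcomp_add hh0, pcomp_mul hh0, pcomp_sub hh0, pcomp_inv hh0 hv0,
    pcomp_inv hh0 (by rwa [constantCoeff_pcomp] : constantCoeff (pcomp g hbar) ≠ 0),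
    pcomp_C hh0, pcomp_pcomp_of_pcomp_eq_X hh0 hinv, C_inv, hvinv,
    ← pdivX_mul_pcomp_pdivX_pcomp_of_pcomp_eq_X hh0 hinv (hf0 (Fin.last m))]
  ring

theorem maMul_maInv (hb0 : constantCoeff b ≠ 0) (hg0 : constantCoeff g ≠ 0)
    (hf0 : ∀ j, constantCoeff (f j) = 0) (hf1 : ∀ j, coeff 1 (f j) ≠ 0)
    (hh0 : constantCoeff h = 0) (hinv : pcomp hbar h = X) :
    maMul (b, g, f, h) (maInv b g f hbar) = (1, 1, fun _ => X, X) := by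
  have hbar1 := left_ne_zero_of_mul_eq_one (coeff_one_mul_coeff_one_of_pcomp_eq_X hinv)
  have hh1 := right_ne_zero_of_mul_eq_one (coeff_one_mul_coeff_one_of_pcomp_eq_X hinv)
  have hu0 : ∀ j, constantCoeff (pdivX (pcomp (f j) hbar)) ≠ 0 := fun j => by
    rw [constantCoeff_pdivX_pcomp]; exact mul_ne_zero (hf1 j) hbar1
  have hb : C (constantCoeff b) * C (constantCoeff b)⁻¹ = 1 := by
    rw [← map_mul, mul_inv_cancel₀ hb0, map_one]
  have hg : g * g⁻¹ = 1 := PowerSeries.mul_inv_cancel _ hg0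
  have hfj : ∀ j, pdivX (f j) * (pdivX (f j))⁻¹ = 1 :=
    fun j => PowerSeries.mul_inv_cancel _ ((constantCoeff_pdivX _).trans_ne (hf1 j))
  have hw : pdivX h * (pdivX h)⁻¹ = 1 :=
    PowerSeries.mul_inv_cancel _ ((constantCoeff_pdivX _).trans_ne hh1)
  simp only [maMul, Prod.mk.injEq]
  refine ⟨?_, ?_, funext fun j => ?_, hinv⟩
  · rw [constantCoeff_maInv_fst, pcomp_maInv_fst hg0 hf0 hh0 hinv]
    linear_combination g * g⁻¹ * C (constantCoeff b)⁻¹ * (C (constantCoeff b) - b) *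
      hfj (Fin.last m) + C (constantCoeff b)⁻¹ * (C (constantCoeff b) - b) * hg + hb
  · rw [maInv, pcomp_inv hh0 (by rwa [constantCoeff_pcomp]),
      pcomp_pcomp_of_pcomp_eq_X hh0 hinv, hg]
  · set U := pcomp (pdivX (pcomp (f j) hbar)) h
    have hU : U * U⁻¹ = 1 :=
      PowerSeries.mul_inv_cancel _ ((constantCoeff_pcomp _ _).trans_ne (hu0 j))
    rw [maInv, pcomp_mul hh0, hinv, pcomp_inv hh0 (hu0 j),
      ← pdivX_mul_pcomp_pdivX_pcomp_of_pcomp_eq_X hh0 hinv (hf0 j)]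
    linear_combination X * (U * U⁻¹) * hw + X * hU

theorem maInv_maMul (hb0 : constantCoeff b ≠ 0) (hg0 : constantCoeff g ≠ 0)
    (hf0 : ∀ j, constantCoeff (f j) = 0) (hf1 : ∀ j, coeff 1 (f j) ≠ 0)
    (hbar0 : constantCoeff hbar = 0) (hinv : pcomp h hbar = X) :
    maMul (maInv b g f hbar) (b, g, f, h) = (1, 1, fun _ => X, X) := by
  have hbar1 := right_ne_zero_of_mul_eq_one (coeff_one_mul_coeff_one_of_pcomp_eq_X hinv)
  have hv0 : constantCoeff (pdivX hbar) ≠ 0 := (constantCoeff_pdivX _).trans_ne hbar1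
  have hu0 : ∀ j, constantCoeff (pdivX (pcomp (f j) hbar)) ≠ 0 := fun j => by
    rw [constantCoeff_pdivX_pcomp]; exact mul_ne_zero (hf1 j) hbar1
  have hb : C (constantCoeff b) * (C (constantCoeff b))⁻¹ = 1 :=
    PowerSeries.mul_inv_cancel _ (by rwa [constantCoeff_C])
  have hv : pdivX hbar * (pdivX hbar)⁻¹ = 1 := PowerSeries.mul_inv_cancel _ hv0
  simp only [maMul, maInv, Prod.mk.injEq, pdivX_mul hbar0]
  refine ⟨?_, PowerSeries.inv_mul_cancel _ (by rwa [constantCoeff_pcomp]),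
    funext fun j => ?_, hinv⟩
  · set u := pdivX (pcomp (f (Fin.last m)) hbar)
    have hu : u * u⁻¹ = 1 := PowerSeries.mul_inv_cancel _ (hu0 _)
    have hvu : (pdivX hbar * u⁻¹)⁻¹ = u * (pdivX hbar)⁻¹ := by
      rw [PowerSeries.inv_eq_iff_mul_eq_one
        (by rw [map_mul, constantCoeff_inv]; exact mul_ne_zero hv0 (inv_ne_zero (hu0 _)))]
      linear_combination u * u⁻¹ * hv + hu
    rw [hvu]
    linear_combination (1 + u * (pdivX hbar)⁻¹ * (pcomp g hbar)⁻¹ *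
      (C (constantCoeff b) - pcomp b hbar)) * hb
  · set u := pdivX (pcomp (f j) hbar)
    have hu : u * u⁻¹ = 1 := PowerSeries.mul_inv_cancel _ (hu0 j)
    have hfu : pcomp (f j) hbar = X * u :=
      (X_mul_pdivX ((constantCoeff_pcomp _ _).trans (hf0 j))).symm
    rw [hfu]
    linear_combination X * u * u⁻¹ * hv + X * hu

end MultipleAlmostRiordan

theorem multiple_almost_riordan_inverse {K : Type*} [Field K] (m : ℕ)
    (b g : PowerSeries K) (f : Fin (m + 1) → PowerSeries K) (h hbar : PowerSeries K)
    (hp : InTl (m + 1) b ∧ constantCoeff b ≠ 0 ∧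
      InTl (m + 1) g ∧ constantCoeff g ≠ 0 ∧
      (∀ j, IsMult (m + 1) (f j)) ∧ IsMult (m + 1) h ∧ h ^ (m + 1) = ∏ j, f j)
    (hinv1 : pcomp h hbar = X) (hinv2 : pcomp hbar h = X) :
    maMul (b, g, f, h)
        ((C (constantCoeff b))⁻¹ +
            pdivX (pcomp (f (Fin.last m)) hbar) * (pdivX hbar)⁻¹ *
              (C (constantCoeff b))⁻¹ * (pcomp g hbar)⁻¹ *
              (C (constantCoeff b) - pcomp b hbar),
          (pcomp g hbar)⁻¹,
          fun j => hbar * (pdivX (pcomp (f j) hbar))⁻¹, hbar) =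
      (1, 1, fun _ => X, X) ∧
    maMul ((C (constantCoeff b))⁻¹ +
            pdivX (pcomp (f (Fin.last m)) hbar) * (pdivX hbar)⁻¹ *
              (C (constantCoeff b))⁻¹ * (pcomp g hbar)⁻¹ *
              (C (constantCoeff b) - pcomp b hbar),
          (pcomp g hbar)⁻¹,
          fun j => hbar * (pdivX (pcomp (f j) hbar))⁻¹, hbar)
        (b, g, f, h) =
      (1, 1, fun _ => X, X) := by
  obtain ⟨-, hb0, -, hg0, hf, hh, -⟩ := hp
  have hf0 : ∀ j, constantCoeff (f j) = 0 := fun j => (hf j).1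
  have hf1 : ∀ j, coeff 1 (f j) ≠ 0 := fun j => (hf j).2.2
  exact ⟨maMul_maInv hb0 hg0 hf0 hf1 hh.1 hinv2,
    maInv_maMul hb0 hg0 hf0 hf1 (constantCoeff_eq_zero_of_pcomp_eq_X hinv2) hinv1⟩
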